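/- arXiv:2005.11835 — 2 statements merged into one kernel-verified Lean document; each statement's English description precedes it below -/
import Mathlib

section
/- Fix a prime r, integers n₀ and k, and a positive integer M₀. For a positive integer q define Σ(q) := ∑_{c = 0}^{q/gcd(q,M₀) − 1} ∑_{a = 1, gcd(a,q)=1}^{q} e( −a((n₀ + c M₀)^r + k)/q ). Then Σ is multiplicative: for any coprime positive integers q₁, q₂ one has Σ(q₁ q₂) = Σ(q₁) Σ(q₂). -/
/-- The exponential sum
`Σ(q) = ∑_{c = 0}^{q/gcd(q,M₀) - 1} ∑_{a mod q, gcd(a,q) = 1} e(-a((n₀ + c M₀)^r + k)/q)`,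
where `e(w) = exp(2πiw)`. -/
noncomputable def singularSum (r : ℕ) (n₀ k : ℤ) (M₀ : ℕ) (q : ℕ) : ℂ :=
  ∑ c ∈ Finset.range (q / Nat.gcd q M₀),
    ∑ a ∈ (Finset.Icc 1 q).filter (fun a => Nat.gcd a q = 1),
      Complex.exp (2 * Real.pi * Complex.I *
        (-(a : ℂ) * (((n₀ + (c : ℤ) * (M₀ : ℤ)) ^ r + k : ℤ) : ℂ) / (q : ℂ)))

/-! The inner sum over `a` is the Ramanujan sum `c_q(m) = ∑_{u ∈ (ℤ/q)ˣ} e(um/q)` at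
`m = -((n₀ + cM₀)^r + k)`; it depends only on `m mod q`. It is multiplicative in `q`: if
`uq₁ + vq₂ = 1` then `e(t/q₁q₂) = e(vt/q₁) e(ut/q₂)`, so the Chinese remainder theorem on units
splits `c_{q₁q₂}(m)` into `c_{q₁}(vm) c_{q₂}(um) = c_{q₁}(m) c_{q₂}(m)`, as `v` and `u` are units
modulo `q₁` and `q₂`. Modulo `q`, `n₀ + cM₀` is periodic in `c` with period `q / gcd(q, M₀)`; for
coprime `q₁, q₂` these periods are coprime with product the period for `q₁q₂`, so the Chinese
remainder theorem, now applied to the outer sum over `c`, splits `Σ(q₁q₂)` into `Σ(q₁) Σ(q₂)`. -/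

open Finset Function

theorem ZMod.sum_Icc_coprime_eq_sum_units {M : Type*} [AddCommMonoid M] (q : ℕ) [NeZero q]
    (F : ZMod q → M) :
    ∑ a ∈ (Icc 1 q).filter (fun a => a.gcd q = 1), F a = ∑ u : (ZMod q)ˣ, F u := by
  have hval_succ (x : ZMod q) : ((x - 1).val + 1 : ℕ) = (x : ZMod q) := by
    push_cast; rw [ZMod.natCast_zmod_val]; ring
  -- `(x - 1).val + 1` is the representative of `x` in `[1, q]`.
  refine sum_bij' (fun a ha => ZMod.unitOfCoprime a (mem_filter.mp ha).2)
    (fun u _ => ((u : ZMod q) - 1).val + 1) (fun _ _ => mem_univ _) ?_ ?_ ?_ ?_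
  · intro u _
    refine mem_filter.mpr ⟨mem_Icc.mpr ⟨le_add_self, ZMod.val_lt _⟩, ?_⟩
    rw [← Nat.Coprime, ← ZMod.isUnit_iff_coprime, hval_succ]
    exact u.isUnit
  · intro a ha
    obtain ⟨h1, hq⟩ := mem_Icc.mp (mem_filter.mp ha).1
    rw [ZMod.coe_unitOfCoprime, ← Nat.cast_one, ← Nat.cast_sub h1, ZMod.val_cast_of_lt (by omega)]
    omega
  · intro u _
    ext
    rw [ZMod.coe_unitOfCoprime, hval_succ]
  · intro _ _
    rfl

theorem ZMod.stdAddChar_intCast_eq_mul_of_bezout {q₁ q₂ : ℕ} [NeZero q₁] [NeZero q₂] {u v : ℤ}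
    (huv : u * q₁ + v * q₂ = 1) (t : ℤ) :
    ZMod.stdAddChar (t : ZMod (q₁ * q₂)) =
      ZMod.stdAddChar ((v * t : ℤ) : ZMod q₁) * ZMod.stdAddChar ((u * t : ℤ) : ZMod q₂) := by
  have hq₁ : (q₁ : ℂ) ≠ 0 := NeZero.ne _
  have hq₂ : (q₂ : ℂ) ≠ 0 := NeZero.ne _
  have huv' : (u : ℂ) * q₁ + v * q₂ = 1 := by exact_mod_cast huv
  rw [ZMod.stdAddChar_coe, ZMod.stdAddChar_coe, ZMod.stdAddChar_coe, ← Complex.exp_add]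
  congr 1
  push_cast
  field_simp
  linear_combination -(t : ℂ) * huv'

noncomputable def ramanujanSum (q : ℕ) [NeZero q] (m : ZMod q) : ℂ :=
  ∑ u : (ZMod q)ˣ, ZMod.stdAddChar ((u : ZMod q) * m)

theorem ramanujanSum_mul_left_of_isUnit {q : ℕ} [NeZero q] {c : ZMod q} (hc : IsUnit c)
    (m : ZMod q) :
    ramanujanSum q (c * m) = ramanujanSum q m := by
  obtain ⟨c, rfl⟩ := hc
  refine Fintype.sum_equiv (Equiv.mulRight c) _ _ fun u => ?_
  simp [mul_assoc]

theorem ramanujanSum_mul {q₁ q₂ : ℕ} [NeZero q₁] [NeZero q₂] (hco : q₁.Coprime q₂) (m : ℤ) :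
    ramanujanSum (q₁ * q₂) m = ramanujanSum q₁ m * ramanujanSum q₂ m := by
  obtain ⟨u, v, huv⟩ : IsCoprime (q₁ : ℤ) q₂ := Nat.isCoprime_iff_coprime.mpr hco
  have hv : IsUnit ((v : ℤ) : ZMod q₁) := by
    refine IsUnit.of_mul_eq_one (q₂ : ZMod q₁) ?_
    simpa using congrArg (Int.cast : ℤ → ZMod q₁) huv
  have hu : IsUnit ((u : ℤ) : ZMod q₂) := by
    refine IsUnit.of_mul_eq_one (q₁ : ZMod q₂) ?_
    simpa using congrArg (Int.cast : ℤ → ZMod q₂) huv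
  let crt : (ZMod (q₁ * q₂))ˣ ≃ (ZMod q₁)ˣ × (ZMod q₂)ˣ :=
    (Units.mapEquiv (ZMod.chineseRemainder hco).toMulEquiv).trans MulEquiv.prodUnits
  rw [← ramanujanSum_mul_left_of_isUnit hv, ← ramanujanSum_mul_left_of_isUnit hu,
    ramanujanSum, ramanujanSum, ramanujanSum, sum_mul_sum, ← Fintype.sum_prod_type']
  refine Fintype.sum_equiv crt _ _ fun w => ?_
  obtain ⟨t, ht⟩ := ZMod.intCast_surjective (w : ZMod (q₁ * q₂))
  have h1 : ((crt w).1 : ZMod q₁) = t := by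
    simp [crt, MulEquiv.prodUnits, ← ht]
  have h2 : ((crt w).2 : ZMod q₂) = t := by
    simp [crt, MulEquiv.prodUnits, ← ht]
  rw [h1, h2, ← ht]
  convert ZMod.stdAddChar_intCast_eq_mul_of_bezout huv (t * m) using 3 <;> push_cast <;> ring

theorem Finset.sum_range_eq_sum_zmod_val {M : Type*} [AddCommMonoid M] (Q : ℕ) [NeZero Q]
    (A : ℕ → M) : ∑ c ∈ range Q, A c = ∑ x : ZMod Q, A x.val := by
  obtain ⟨n, rfl⟩ := Nat.exists_eq_succ_of_ne_zero (NeZero.ne Q)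
  exact (Fin.sum_univ_eq_sum_range _ _).symm

theorem Function.Periodic.sum_range_mul_of_coprime {R : Type*} [CommSemiring R] {A B : ℕ → R}
    {Q₁ Q₂ : ℕ} [NeZero Q₁] [NeZero Q₂] (hA : Periodic A Q₁) (hB : Periodic B Q₂)
    (hco : Q₁.Coprime Q₂) :
    ∑ c ∈ range (Q₁ * Q₂), A c * B c = (∑ c ∈ range Q₁, A c) * ∑ c ∈ range Q₂, B c := by
  simp only [sum_range_eq_sum_zmod_val, sum_mul_sum, ← Fintype.sum_prod_type']
  refine Fintype.sum_equiv (ZMod.chineseRemainder hco).toEquiv _ _ fun x => ?_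
  have hx : ZMod.chineseRemainder hco x = ((x.val : ZMod Q₁), (x.val : ZMod Q₂)) := by
    conv_lhs => rw [← ZMod.natCast_zmod_val x]
    exact map_natCast _ _
  rw [show (ZMod.chineseRemainder hco).toEquiv x = _ from hx, ZMod.val_natCast, ZMod.val_natCast,
    hA.map_mod_nat, hB.map_mod_nat]

theorem ZMod.periodic_intCast_add_mul (q M : ℕ) (n₀ : ℤ) :
    Periodic (fun c : ℕ => (n₀ : ZMod q) + c * M) (q / q.gcd M) := by
  intro c
  have hdvd : q ∣ q / q.gcd M * M := ⟨M / q.gcd M, by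
    rw [Nat.div_mul_right_comm (Nat.gcd_dvd_left q M), Nat.mul_div_assoc _ (Nat.gcd_dvd_right q M)]⟩
  have hzero : ((q / q.gcd M * M : ℕ) : ZMod q) = 0 := (ZMod.natCast_eq_zero_iff _ _).mpr hdvd
  simp only [Nat.cast_add, Nat.cast_mul] at hzero ⊢
  linear_combination hzero

instance Nat.neZero_div_gcd (q M : ℕ) [NeZero q] : NeZero (q / q.gcd M) :=
  ⟨(Nat.div_gcd_pos_of_pos_left M (Nat.pos_of_neZero q)).ne'⟩

theorem singularSum_eq_sum_ramanujanSum (r : ℕ) (n₀ k : ℤ) (M₀ q : ℕ) [NeZero q] :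
    singularSum r n₀ k M₀ q =
      ∑ c ∈ range (q / q.gcd M₀), ramanujanSum q ((-((n₀ + c * M₀) ^ r + k) : ℤ)) := by
  refine sum_congr rfl fun c _ => ?_
  rw [ramanujanSum, ← ZMod.sum_Icc_coprime_eq_sum_units q (fun x => ZMod.stdAddChar (x * _))]
  refine sum_congr rfl fun a _ => ?_
  rw [← Int.cast_natCast (R := ZMod q), ← Int.cast_mul, ZMod.stdAddChar_coe]
  push_cast
  ring_nf

theorem singularSum_multiplicative_general
    (r : ℕ) (n₀ k : ℤ) (M₀ : ℕ)
    (q₁ q₂ : ℕ) (hco : Nat.Coprime q₁ q₂) :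
    singularSum r n₀ k M₀ (q₁ * q₂) =
      singularSum r n₀ k M₀ q₁ * singularSum r n₀ k M₀ q₂ := by
  -- `Σ(0)` is an empty sum.
  rcases eq_or_ne q₁ 0 with rfl | hq₁
  · simp [singularSum]
  rcases eq_or_ne q₂ 0 with rfl | hq₂
  · simp [singularSum]
  have : NeZero q₁ := ⟨hq₁⟩
  have : NeZero q₂ := ⟨hq₂⟩
  have hper (q : ℕ) [NeZero q] : Periodic
      (fun c : ℕ => ramanujanSum q ((-((n₀ + c * M₀) ^ r + k) : ℤ))) (q / q.gcd M₀) := by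
    intro c
    simp only [Int.cast_neg, Int.cast_add, Int.cast_pow, Int.cast_mul, Int.cast_natCast]
    exact (ZMod.periodic_intCast_add_mul q M₀ n₀).comp (fun x => ramanujanSum q (-(x ^ r + k))) c
  have hgcd : (q₁ * q₂).gcd M₀ = q₁.gcd M₀ * q₂.gcd M₀ := by
    rw [Nat.gcd_comm, hco.gcd_mul, Nat.gcd_comm M₀, Nat.gcd_comm M₀]
  have hcoQ : (q₁ / q₁.gcd M₀).Coprime (q₂ / q₂.gcd M₀) :=
    (hco.coprime_div_left (Nat.gcd_dvd_left _ _)).coprime_div_right (Nat.gcd_dvd_left _ _)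
  simp only [singularSum_eq_sum_ramanujanSum, hgcd,
    ← Nat.div_mul_div_comm (Nat.gcd_dvd_left q₁ M₀) (Nat.gcd_dvd_left q₂ M₀), ramanujanSum_mul hco]
  exact (hper q₁).sum_range_mul_of_coprime (hper q₂) hcoQ

/-- For a prime `r`, integers `n₀, k` and a positive integer `M₀`, the exponential sum `Σ(q)`
is multiplicative: `Σ(q₁ q₂) = Σ(q₁) Σ(q₂)` for coprime positive integers `q₁, q₂`. -/
theorem singularSum_multiplicative
    (r : ℕ) (hr : r.Prime) (n₀ k : ℤ) (M₀ : ℕ) (hM₀ : 0 < M₀)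
    (q₁ q₂ : ℕ) (hq₁ : 0 < q₁) (hq₂ : 0 < q₂) (hco : Nat.Coprime q₁ q₂) :
    singularSum r n₀ k M₀ (q₁ * q₂) =
      singularSum r n₀ k M₀ q₁ * singularSum r n₀ k M₀ q₂ :=
  singularSum_multiplicative_general r n₀ k M₀ q₁ q₂ hco
end

section
/- Fix a prime r, integers n₀ and k, and a positive integer M₀, and for a positive integer q define Σ(q) := ∑_{c = 0}^{q/gcd(q,M₀) − 1} ∑_{a = 1, gcd(a,q)=1}^{q} e( −a((n₀ + c M₀)^r + k)/q ). Then: (i) for every prime p not dividing M₀, Σ(p) = p·(n_{k,p} − 1); and (ii) for every prime p dividing M₀ such that p does not divide n₀^r + k, Σ(p) = −1. -/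
/-- `nkp r k p` is the number of `u ∈ ℤ/pℤ` with `u ^ r + k ≡ 0 (mod p)`. -/
noncomputable def nkp (r : ℕ) (k : ℤ) (p : ℕ) : ℕ :=
  Nat.card {u : ZMod p // u ^ r + (k : ZMod p) = 0}

/-! At a prime `p` the residues coprime to `p` are `1, …, p - 1`, so the inner sum is the sum of
all `p`-th roots of unity `e(-a m / p)` minus the term `a = 0`: it is `p - 1` when `p ∣ m` and `-1`
otherwise. If `p ∤ M₀`, then `c ↦ n₀ + c M₀` runs through all of `ℤ/pℤ` as `c` runs through
`0, …, p - 1`, so exactly `n_{k,p}` of the `p` terms equal `p - 1`. If `p ∣ M₀`, only `c = 0`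
remains. -/

open Finset Complex

lemma exp_two_pi_I_mul_neg_div_eq_pow (q : ℕ) (m : ℤ) (a : ℕ) :
    exp (2 * Real.pi * I * (-(a : ℂ) * (m : ℂ) / (q : ℂ))) =
      (exp (2 * Real.pi * I / q) ^ (-m)) ^ a := by
  rw [← exp_int_mul, ← exp_nat_mul]
  push_cast
  ring_nf

lemma sum_range_exp_two_pi_I_mul_neg_div {q : ℕ} (hq : q ≠ 0) (m : ℤ) :
    ∑ a ∈ range q, exp (2 * Real.pi * I * (-(a : ℂ) * (m : ℂ) / (q : ℂ))) =
      if (q : ℤ) ∣ m then (q : ℂ) else 0 := by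
  have hζ := isPrimitiveRoot_exp q hq
  simp_rw [exp_two_pi_I_mul_neg_div_eq_pow]
  split_ifs with hdvd
  · rw [(hζ.zpow_eq_one_iff_dvd (-m)).mpr (dvd_neg.mpr hdvd)]
    simp
  · have hne : exp (2 * Real.pi * I / q) ^ (-m) ≠ 1 :=
      fun h => hdvd (dvd_neg.mp ((hζ.zpow_eq_one_iff_dvd (-m)).mp h))
    have hpow : (exp (2 * Real.pi * I / q) ^ (-m)) ^ q = 1 := by
      rw [← zpow_natCast, ← zpow_mul, mul_comm (-m), zpow_mul, zpow_natCast, hζ.pow_eq_one,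
        one_zpow]
    rw [geom_sum_eq hne, hpow, sub_self, zero_div]

lemma Nat.Prime.filter_coprime_Icc_eq_Ico {p : ℕ} (hp : p.Prime) :
    (Icc 1 p).filter (fun a => Nat.gcd a p = 1) = Ico 1 p := by
  ext a
  simp only [mem_filter, mem_Icc, mem_Ico, ← Nat.coprime_iff_gcd_eq_one,
    Nat.coprime_comm, hp.coprime_iff_not_dvd]
  constructor
  · rintro ⟨⟨ha1, hap⟩, hndvd⟩
    exact ⟨ha1, lt_of_le_of_ne hap fun h => hndvd (h ▸ dvd_rfl)⟩
  · rintro ⟨ha1, hap⟩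
    exact ⟨⟨ha1, hap.le⟩, fun h => (Nat.le_of_dvd ha1 h).not_gt hap⟩

lemma sum_coprime_exp_two_pi_I_mul_neg_div {p : ℕ} (hp : p.Prime) (m : ℤ) :
    ∑ a ∈ (Icc 1 p).filter (fun a => Nat.gcd a p = 1),
      exp (2 * Real.pi * I * (-(a : ℂ) * (m : ℂ) / (p : ℂ))) =
      if (p : ℤ) ∣ m then (p : ℂ) - 1 else -1 := by
  have hsplit := sum_range_exp_two_pi_I_mul_neg_div hp.ne_zero m
  rw [range_eq_Ico, sum_eq_sum_Ico_succ_bot hp.pos] at hsplit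
  rw [hp.filter_coprime_Icc_eq_Ico, eq_sub_of_add_eq' hsplit]
  split_ifs <;> simp

lemma card_filter_range_affine_eq_card {p : ℕ} [NeZero p] (P : ZMod p → Prop) [DecidablePred P]
    (a : ZMod p) {b : ZMod p} (hb : IsUnit b) :
    #{c ∈ range p | P (a + (c : ℕ) * b)} = Nat.card {u : ZMod p // P u} := by
  have hrange : #{c ∈ range p | P (a + (c : ℕ) * b)} = #{x : ZMod p | P (a + x * b)} := by
    refine card_nbij (fun c => (c : ZMod p)) ?_ ?_ ?_
    · intro c hc
      simp_all
    · intro c₁ h₁ c₂ h₂ h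
      simp only [coe_filter, mem_range, Set.mem_ofPred_eq] at h₁ h₂
      have := (ZMod.natCast_eq_natCast_iff' c₁ c₂ p).mp h
      rwa [Nat.mod_eq_of_lt h₁.1, Nat.mod_eq_of_lt h₂.1] at this
    · intro x hx
      exact ⟨x.val, by simp_all [ZMod.val_lt], by simp⟩
  rw [hrange, ← Fintype.card_subtype, Nat.card_eq_fintype_card]
  exact Fintype.card_congr <|
    ((Units.mulRight hb.unit).trans (Equiv.addLeft a)).subtypeEquiv fun x => Iff.rfl

lemma card_filter_range_dvd_eq_nkp (r : ℕ) (n₀ k : ℤ) {M₀ p : ℕ} (hp : p.Prime)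
    (hM₀ : ¬ p ∣ M₀) :
    #{c ∈ range p | (p : ℤ) ∣ (n₀ + ((c : ℕ) : ℤ) * M₀) ^ r + k} = nkp r k p := by
  have := Fact.mk hp
  have hunit : IsUnit (M₀ : ZMod p) :=
    isUnit_iff_ne_zero.mpr ((ZMod.natCast_eq_zero_iff M₀ p).not.mpr hM₀)
  rw [nkp, ← card_filter_range_affine_eq_card (fun u => u ^ r + (k : ZMod p) = 0) (n₀ : ZMod p)
    hunit]
  congr 1
  refine filter_congr fun c _ => ?_
  rw [← ZMod.intCast_zmod_eq_zero_iff_dvd]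
  push_cast
  rfl

lemma singularSum_of_prime (r : ℕ) (n₀ k : ℤ) (M₀ : ℕ) {p : ℕ} (hp : p.Prime) :
    singularSum r n₀ k M₀ p = ∑ c ∈ range (p / Nat.gcd p M₀),
      if (p : ℤ) ∣ (n₀ + (c : ℤ) * M₀) ^ r + k then (p : ℂ) - 1 else -1 :=
  sum_congr rfl fun _ _ => sum_coprime_exp_two_pi_I_mul_neg_div hp _

theorem singularSum_at_primes_general
    (r : ℕ) (n₀ k : ℤ) (M₀ : ℕ) (p : ℕ) (hp : p.Prime) :
    (¬ p ∣ M₀ →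
      singularSum r n₀ k M₀ p = (p : ℂ) * ((nkp r k p : ℂ) - 1)) ∧
    (p ∣ M₀ → ¬ (p : ℤ) ∣ (n₀ ^ r + k) →
      singularSum r n₀ k M₀ p = -1) := by
  refine ⟨fun hM₀ => ?_, fun hM₀ hk => ?_⟩
  · rw [singularSum_of_prime r n₀ k M₀ hp,
      Nat.Coprime.gcd_eq_one (hp.coprime_iff_not_dvd.mpr hM₀), Nat.div_one]
    calc _ = ∑ c ∈ range p,
            ((if (p : ℤ) ∣ (n₀ + (c : ℤ) * M₀) ^ r + k then (p : ℂ) else 0) - 1) :=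
          sum_congr rfl fun _ _ => by split_ifs <;> ring
      _ = (p : ℂ) * ((nkp r k p : ℂ) - 1) := by
          rw [sum_sub_distrib, ← sum_filter, sum_const, sum_const, card_range,
            card_filter_range_dvd_eq_nkp r n₀ k hp hM₀, nsmul_eq_mul, nsmul_eq_mul]
          ring
  · rw [singularSum_of_prime r n₀ k M₀ hp, Nat.gcd_eq_left hM₀, Nat.div_self hp.pos,
      sum_range_one]
    simp [hk]

/-- For a prime `r`, integers `n₀, k` and a positive integer `M₀`:
(i) for every prime `p ∤ M₀`, `Σ(p) = p (n_{k,p} - 1)`;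
(ii) for every prime `p ∣ M₀` with `p ∤ n₀^r + k`, `Σ(p) = -1`. -/
theorem singularSum_at_primes
    (r : ℕ) (hr : r.Prime) (n₀ k : ℤ) (M₀ : ℕ) (hM₀ : 0 < M₀) (p : ℕ) (hp : p.Prime) :
    (¬ p ∣ M₀ →
      singularSum r n₀ k M₀ p = (p : ℂ) * ((nkp r k p : ℂ) - 1)) ∧
    (p ∣ M₀ → ¬ (p : ℤ) ∣ (n₀ ^ r + k) →
      singularSum r n₀ k M₀ p = -1) :=
  singularSum_at_primes_general r n₀ k M₀ p hp
end
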